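/- arXiv:2011.03197 — 3 statements merged into one kernel-verified Lean document; each statement's English description precedes it below -/
import Mathlib

section
/- Let D be a nonempty set and g_1,...,g_M : D → ℝ objective functions to be minimized, and for each j let U_j > L_j be real numbers, with membership values μ_j(x) = (U_j − g_j(x))/(U_j − L_j). If x* ∈ D maximizes the max–min aggregation min_{1 ≤ j ≤ M} μ_j(x) over D, then x* is weakly Pareto optimal. -/
/-- A maximizer of the max–min aggregation of the linear fuzzy membership
functions `μ_j(x) = (U_j - g_j(x)) / (U_j - L_j)` over the feasible set `D`
is weakly Pareto optimal. -/
theorem fuzzy_maxmin_maximizer_weakly_pareto_optimal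
    {D : Type*} [Nonempty D] (M : ℕ) (hM : 0 < M) (g : Fin M → D → ℝ)
    (U L : Fin M → ℝ) (hUL : ∀ j, L j < U j) (xstar : D)
    (hmax : ∀ x : D, (⨅ j : Fin M, (U j - g j x) / (U j - L j)) ≤
      ⨅ j : Fin M, (U j - g j xstar) / (U j - L j)) :
    ¬ ∃ x : D, ∀ j, g j x < g j xstar := by
  rintro ⟨x, hx⟩
  haveI : Nonempty (Fin M) := ⟨⟨0, hM⟩⟩
  set μx : Fin M → ℝ := fun j => (U j - g j x) / (U j - L j) with hμx
  set μs : Fin M → ℝ := fun j => (U j - g j xstar) / (U j - L j) with hμs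
  obtain ⟨j₁, hj₁⟩ := Finite.exists_min μx
  have hlt : μs j₁ < μx j₁ := by
    have hc : (0:ℝ) < U j₁ - L j₁ := by linarith [hUL j₁]
    have := hx j₁
    simp only [hμx, hμs]
    gcongr
  have hinfs : (⨅ j, μs j) ≤ μs j₁ := ciInf_le (Set.Finite.bddBelow (Set.finite_range μs)) j₁
  have hinfx : μx j₁ ≤ ⨅ j, μx j := le_ciInf hj₁
  have := hmax x
  simp only [← hμx, ← hμs] at this
  linarith
end

section
/- Let D be a nonempty set and g_1,...,g_M : D → ℝ objective functions to be minimized. Let p ≥ 1 be a real number, let z_1,...,z_M be reals with z_j ≤ g_j(x) for all x ∈ D and all j (an ideal objective vector), and let d_1,...,d_M > 0 be normalization constants. If x* ∈ D minimizes the global criterion G(x) = Σ_{j=1}^M ((g_j(x) − z_j)/d_j)^p over D, then x* is Pareto optimal. -/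
/-- A minimizer of the global criterion
`G(x) = ∑ j, ((g_j(x) - z_j) / d_j) ^ p` (with `p ≥ 1`, ideal objective vector
`z`, and positive normalization constants `d`) over the feasible set `D` is
Pareto optimal. -/
theorem global_criterion_minimizer_pareto_optimal
    {D : Type*} [Nonempty D] (M : ℕ) (g : Fin M → D → ℝ)
    (p : ℝ) (hp : 1 ≤ p) (z : Fin M → ℝ) (hz : ∀ (x : D) (j : Fin M), z j ≤ g j x)
    (d : Fin M → ℝ) (hd : ∀ j, 0 < d j) (xstar : D)
    (hmin : ∀ x : D, ∑ j : Fin M, ((g j xstar - z j) / d j) ^ p ≤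
      ∑ j : Fin M, ((g j x - z j) / d j) ^ p) :
    ¬ ∃ x : D, (∀ j, g j x ≤ g j xstar) ∧ (∃ j, g j x < g j xstar) := by
  rintro ⟨x, hle, j₀, hlt⟩
  have hnn : ∀ (y : D) (j : Fin M), 0 ≤ (g j y - z j) / d j := fun y j =>
    div_nonneg (sub_nonneg.2 (hz y j)) (hd j).le
  have hsum : ∑ j : Fin M, ((g j x - z j) / d j) ^ p <
      ∑ j : Fin M, ((g j xstar - z j) / d j) ^ p := by
    apply Finset.sum_lt_sum
    · intro j _
      exact Real.rpow_le_rpow (hnn x j)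
        (div_le_div_of_nonneg_right (by linarith [hle j]) (hd j).le) (by linarith)
    · exact ⟨j₀, Finset.mem_univ j₀,
        Real.rpow_lt_rpow (hnn x j₀)
          ((div_lt_div_iff_of_pos_right (hd j₀)).2 (by linarith))
          (by linarith)⟩
  exact absurd (hmin x) (not_le.2 hsum)
end

section
/- Let D be a nonempty set and g_1,...,g_M : D → ℝ objective functions to be minimized, let z_1,...,z_M be real reference values, let d_1,...,d_M > 0 be normalization constants, and let ρ > 0 be an augmentation coefficient. If x* ∈ D minimizes the augmented scalarizing function max_{1 ≤ j ≤ M} (g_j(x) − z_j)/d_j + ρ Σ_{j=1}^M g_j(x)/d_j over D, then x* is Pareto optimal. -/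
/-- A minimizer of the augmented weighted Chebyshev scalarizing function
`max_j (g_j(x) - z_j)/d_j + ρ ∑ j, g_j(x)/d_j` (with augmentation coefficient
`ρ > 0`) over the feasible set `D` is Pareto optimal. -/
theorem augmented_chebyshev_minimizer_pareto_optimal
    {D : Type*} [Nonempty D] (M : ℕ) (hM : 0 < M) (g : Fin M → D → ℝ)
    (z : Fin M → ℝ) (d : Fin M → ℝ) (hd : ∀ j, 0 < d j)
    (ρ : ℝ) (hρ : 0 < ρ) (xstar : D)
    (hmin : ∀ x : D,
      (⨆ j : Fin M, (g j xstar - z j) / d j) + ρ * ∑ j : Fin M, g j xstar / d j ≤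
      (⨆ j : Fin M, (g j x - z j) / d j) + ρ * ∑ j : Fin M, g j x / d j) :
    ¬ ∃ x : D, (∀ j, g j x ≤ g j xstar) ∧ (∃ j, g j x < g j xstar) := by
  rintro ⟨x, hle, j0, hlt⟩
  haveI : Nonempty (Fin M) := Fin.pos_iff_nonempty.mp hM
  have hsup : (⨆ j : Fin M, (g j x - z j) / d j) ≤ ⨆ j : Fin M, (g j xstar - z j) / d j := by
    apply ciSup_mono (Set.Finite.bddAbove (Set.finite_range _))
    intro j
    gcongr
    · exact (hd j).le
    · exact hle j
  have hsum : (∑ j : Fin M, g j x / d j) < ∑ j : Fin M, g j xstar / d j := by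
    apply Finset.sum_lt_sum
    · intro j _
      gcongr
      · exact (hd j).le
      · exact hle j
    · exact ⟨j0, Finset.mem_univ _, by gcongr; exact hd j0⟩
  have := hmin x
  nlinarith [mul_lt_mul_of_pos_left hsum hρ]
end
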